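/- arXiv:1301.5221 — 4 statements merged into one kernel-verified Lean document; each statement's English description precedes it below -/
import Mathlib

section
/- Let k be a field, h ≥ 2, m = h(h+1)/2, and let M be the generic symmetric h×h matrix whose (i,j)-entry is the variable Y_{ij} = Y_{ji}, so that det M ∈ k[Y_{ij} : 1 ≤ i ≤ j ≤ h]. Then the weight lattice of det M equals the trace-zero part of Λ_h; that is, identifying ℤ^m with symmetric integer h×h matrices ω = (ω_{ij}), one has Λ(det M) = {ω : 2ω_{ij} = ω_{ii} + ω_{jj} for all i,j, and Σ_{i=1}^h ω_{ii} = 0}. -/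
open MvPolynomial

/-- The weight lattice `Λ(f) = {η ∈ ℤ^σ : η·α = 0 for every exponent vector α with c_α ≠ 0}`
of a polynomial `f = Σ_α c_α X^α`, as a sublattice (submodule over `ℤ`) of `σ → ℤ`. -/
def weightLattice {σ : Type*} [Fintype σ] {k : Type*} [CommSemiring k]
    (f : MvPolynomial σ k) : Submodule ℤ (σ → ℤ) where
  carrier := {η | ∀ α ∈ f.support, ∑ i, η i * (α i : ℤ) = 0}
  add_mem' := by
    intro a b ha hb α hα
    simp only [Pi.add_apply, add_mul, Finset.sum_add_distrib, ha α hα, hb α hα, add_zero]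
  zero_mem' := by
    intro α hα
    simp
  smul_mem' := by
    intro c x hx α hα
    simp only [Pi.smul_apply, smul_eq_mul, mul_assoc, ← Finset.mul_sum, hx α hα, mul_zero]

/-!
Expanding `det M = Σ_σ sign σ · ∏_i Y_{σ(i) i}`, the monomial of `σ` has exponent
`permExponent σ = Σ_i δ_{σ(i) i}`, and its pairing with `ω` is `Σ_i ω_{σ(i) i}`. If
`2ω_{ij} = ω_{ii} + ω_{jj}`, this pairing equals the trace of `ω`, so the trace-zero part of
`Λ_h` lies in `Λ(det M)`. Conversely, the diagonal of `permExponent σ` records the fixed points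
of `σ`, so the identity and each transposition `(i j)` are the only permutations with their
exponent; their monomials therefore survive in `det M`, and pairing `ω` with them gives
`tr ω = 0` and `tr ω - ω_{ii} - ω_{jj} + 2ω_{ij} = 0`.
-/

open Equiv Finset

namespace Equiv.Perm

variable {α : Type*} [DecidableEq α] [Fintype α]

theorem eq_swap_of_support_eq_pair {σ : Perm α} {i j : α}
    (hσ : σ.support = {i, j}) : σ = swap i j := by
  have hi : i ∈ σ.support := by simp [hσ]
  have hj : j ∈ σ.support := by simp [hσ]
  have hσi : σ i = j := by
    have := apply_mem_support.mpr hi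
    simpa [hσ, mem_support.mp hi] using this
  have hσj : σ j = i := by
    have := apply_mem_support.mpr hj
    simpa [hσ, mem_support.mp hj] using this
  ext l
  by_cases hli : l = i
  · simp [hli, hσi]
  by_cases hlj : l = j
  · simp [hlj, hσj]
  have hl : l ∉ σ.support := by simp [hσ, hli, hlj]
  rw [notMem_support.mp hl, swap_apply_of_ne_of_ne hli hlj]

end Equiv.Perm

section GenericSymmetric

variable {n : Type*} [Fintype n]

theorem sum_perm_eq_trace {ω : Sym2 n → ℤ}
    (hω : ∀ i j : n, 2 * ω s(i, j) = ω s(i, i) + ω s(j, j)) (σ : Perm n) :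
    ∑ i, ω s(σ i, i) = ∑ i, ω s(i, i) := by
  have : 2 * ∑ i, ω s(σ i, i) = 2 * ∑ i, ω s(i, i) := by
    rw [Finset.mul_sum, Finset.sum_congr rfl fun i _ => hω (σ i) i, Finset.sum_add_distrib,
      Equiv.sum_comp σ fun i => ω s(i, i), two_mul]
  linarith

variable (n) in
noncomputable def genericSymmetricMatrix (R : Type*) [CommSemiring R] :
    Matrix n n (MvPolynomial (Sym2 n) R) :=
  Matrix.of fun i j => X s(i, j)

noncomputable def permExponent (σ : Perm n) : Sym2 n →₀ ℕ :=
  ∑ i, Finsupp.single s(σ i, i) 1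

variable [DecidableEq n]

theorem permExponent_apply_diag (σ : Perm n) (j : n) :
    permExponent σ s(j, j) = if σ j = j then 1 else 0 := by
  rw [permExponent, Finsupp.finsetSum_apply, Finset.sum_eq_single j]
  · by_cases hσj : σ j = j <;> simp [hσj]
  · intro i _ hij
    simp [hij]
  · simp

theorem support_eq_of_permExponent_eq {σ τ : Perm n} (h : permExponent σ = permExponent τ) :
    σ.support = τ.support := by
  ext j
  have := DFunLike.congr_fun h s(j, j)
  rw [permExponent_apply_diag, permExponent_apply_diag] at this
  by_cases hσ : σ j = j <;> by_cases hτ : τ j = j <;> simp_all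

theorem sum_mul_permExponent (ω : Sym2 n → ℤ) (σ : Perm n) :
    ∑ p, ω p * (permExponent σ p : ℤ) = ∑ i, ω s(σ i, i) := by
  simp only [permExponent, Finsupp.finsetSum_apply, Nat.cast_sum, Finset.mul_sum,
    Finsupp.single_apply, Nat.cast_ite, Nat.cast_one, Nat.cast_zero, mul_ite, mul_one, mul_zero]
  rw [Finset.sum_comm]
  simp

variable {R : Type*} [CommRing R]

theorem det_genericSymmetricMatrix :
    (genericSymmetricMatrix n R).det =
      ∑ σ : Perm n, Perm.sign σ • monomial (permExponent σ) (1 : R) := by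
  simp only [Matrix.det_apply, genericSymmetricMatrix, Matrix.of_apply, permExponent,
    monomial_sum_one, X]

theorem coeff_det_genericSymmetricMatrix (α : Sym2 n →₀ ℕ) :
    coeff α (genericSymmetricMatrix n R).det =
      ∑ σ : Perm n, if permExponent σ = α then ((Perm.sign σ : ℤ) : R) else 0 := by
  simp only [det_genericSymmetricMatrix, coeff_sum, Units.smul_def, coeff_smul, coeff_monomial]
  simp only [smul_ite, zsmul_eq_mul, mul_one, smul_zero]

theorem exists_permExponent_eq_of_mem_support {α : Sym2 n →₀ ℕ}
    (hα : α ∈ (genericSymmetricMatrix n R).det.support) :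
    ∃ σ : Perm n, permExponent σ = α := by
  by_contra! hne
  rw [mem_support_iff, coeff_det_genericSymmetricMatrix] at hα
  exact hα (Finset.sum_eq_zero fun σ _ => if_neg (hne σ))

theorem permExponent_mem_support_det [Nontrivial R] {τ : Perm n}
    (huniq : ∀ σ : Perm n, permExponent σ = permExponent τ → σ = τ) :
    permExponent τ ∈ (genericSymmetricMatrix n R).det.support := by
  rw [mem_support_iff, coeff_det_genericSymmetricMatrix,
    Finset.sum_eq_single_of_mem τ (mem_univ τ) fun σ _ hστ => if_neg (hστ ∘ huniq σ),
    if_pos rfl]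
  rcases Int.units_eq_one_or (Perm.sign τ) with h | h <;> simp [h]

theorem mem_weightLattice_det_of_forall_perm {ω : Sym2 n → ℤ}
    (hω : ∀ σ : Perm n, ∑ i, ω s(σ i, i) = 0) :
    ω ∈ weightLattice (genericSymmetricMatrix n R).det := by
  intro α hα
  obtain ⟨σ, rfl⟩ := exists_permExponent_eq_of_mem_support hα
  rw [sum_mul_permExponent, hω σ]

theorem sum_perm_eq_zero_of_mem_weightLattice_det [Nontrivial R] {ω : Sym2 n → ℤ}
    (hω : ω ∈ weightLattice (genericSymmetricMatrix n R).det) {τ : Perm n}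
    (huniq : ∀ σ : Perm n, permExponent σ = permExponent τ → σ = τ) :
    ∑ i, ω s(τ i, i) = 0 := by
  rw [← sum_mul_permExponent]
  exact hω _ (permExponent_mem_support_det huniq)

theorem sum_swap_apply_sym2 (ω : Sym2 n → ℤ) {i j : n} (hij : i ≠ j) :
    ∑ l, ω s(swap i j l, l) = ∑ l, ω s(l, l) - ω s(i, i) - ω s(j, j) + 2 * ω s(i, j) := by
  have hoff : ∑ l, (ω s(swap i j l, l) - ω s(l, l)) =
      ∑ l ∈ {i, j}, (ω s(swap i j l, l) - ω s(l, l)) := by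
    refine (Finset.sum_subset (subset_univ _) fun l _ hl => ?_).symm
    simp only [mem_insert, mem_singleton, not_or] at hl
    rw [swap_apply_of_ne_of_ne hl.1 hl.2, sub_self]
  rw [Finset.sum_pair hij, swap_apply_left, swap_apply_right, Finset.sum_sub_distrib,
    Sym2.eq_swap] at hoff
  linarith

end GenericSymmetric

theorem weightLattice_det_generic_symmetric_general {k : Type*} [Field k] {h : ℕ}
    (M : Matrix (Fin h) (Fin h) (MvPolynomial (Sym2 (Fin h)) k))
    (hM : ∀ i j : Fin h, M i j = X s(i, j)) :
    (weightLattice M.det : Set (Sym2 (Fin h) → ℤ)) =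
      {ω | (∀ i j : Fin h, 2 * ω s(i, j) = ω s(i, i) + ω s(j, j)) ∧
        ∑ i : Fin h, ω s(i, i) = 0} := by
  obtain rfl : M = genericSymmetricMatrix (Fin h) k := Matrix.ext hM
  ext ω
  refine ⟨fun hω => ?_, fun ⟨hpair, htr⟩ => ?_⟩
  · have htr : ∑ i, ω s(i, i) = 0 := by
      simpa using sum_perm_eq_zero_of_mem_weightLattice_det hω (τ := 1) fun σ hσ =>
        Perm.support_eq_empty_iff.mp ((support_eq_of_permExponent_eq hσ).trans Perm.support_one)
    refine ⟨fun i j => ?_, htr⟩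
    rcases eq_or_ne i j with rfl | hij
    · ring
    have hswap := sum_perm_eq_zero_of_mem_weightLattice_det hω (τ := swap i j) fun σ hσ =>
      Perm.eq_swap_of_support_eq_pair
        ((support_eq_of_permExponent_eq hσ).trans (Perm.support_swap hij))
    rw [sum_swap_apply_sym2 ω hij, htr] at hswap
    linarith
  · exact mem_weightLattice_det_of_forall_perm fun σ => (sum_perm_eq_trace hpair σ).trans htr

/-- Let `k` be a field, `h ≥ 2`, and `M` the generic symmetric `h×h` matrix whose
`(i,j)` entry is the variable `Y_{ij} = Y_{ji}` (variables indexed by `Sym2 (Fin h)`, which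
realizes the identification of `ℤ^m`, `m = h(h+1)/2`, with symmetric integer `h×h` matrices).
Then the weight lattice of `det M` equals the trace-zero part of `Λ_h`:
`Λ(det M) = {ω : 2ω_{ij} = ω_{ii} + ω_{jj} for all i,j, and Σ_i ω_{ii} = 0}`. -/
theorem weightLattice_det_generic_symmetric {k : Type*} [Field k] {h : ℕ} (hh : 2 ≤ h)
    (M : Matrix (Fin h) (Fin h) (MvPolynomial (Sym2 (Fin h)) k))
    (hM : ∀ i j : Fin h, M i j = X s(i, j)) :
    (weightLattice M.det : Set (Sym2 (Fin h) → ℤ)) =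
      {ω | (∀ i j : Fin h, 2 * ω s(i, j) = ω s(i, i) + ω s(j, j)) ∧
        ∑ i : Fin h, ω s(i, i) = 0} :=
  weightLattice_det_generic_symmetric_general M hM
end

section
/- Let k be an infinite field and M a symmetric h×h matrix of homogeneous linear forms in k[X₁,…,Xₙ] whose diagonal entries are nonzero and linearly independent; let ℓ(M) be the dimension of the span of all upper-triangular entries. Assume coordinates are chosen so that each nonzero entry of M is either one of the variables X₁,…,X_{ℓ(M)} or a linear form L_{ij}(X₁,…,X_{ℓ(M)}), with the h diagonal entries being h distinct variables. Define an equivalence relation (clusters) on the set of positions (i,j), i ≤ j, with M_{ij} ≠ 0, as the transitive closure of the relation identifying two positions whenever some variable occurs with nonzero coefficient in both entries; call a position (i,j) excessive if the diagonal variable M_{ii} or the diagonal variable M_{jj} does not occur with nonzero coefficient in M_{ij}; and set δ(M) = Σ_{clusters C} (|C| − 1) + #{excessive positions}. Then the hypersurface X = {det M = 0} ⊆ P^{n−1}(k) admits a linear, faithful torus action, diagonal in the coordinates X₁,…,Xₙ, of rank at least max(0, h − 1 + n − ℓ(M) − δ(M)). -/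
/-!
Let the torus act diagonally, `X_v ↦ (∏ m, t_m ^ W v m) X_v`. If every variable `v` of every
linear entry `M i j` satisfies `2 W_v = W_{d i} + W_{d j}`, then `M i j` is weighted homogeneous
of degree `(W_{d i} + W_{d j}) / 2`, so `det M` is weighted homogeneous of degree `∑ i, W_{d i}`
and the action rescales it.

The admissible weights form a saturated lattice `L ∋ (1, …, 1)`. It suffices to impose one
equation for each off-diagonal variable (at one position where it occurs) and, for each cluster
`C`, that `w_{d i} + w_{d j}` is constant on `C` (`|C| - 1` equations): the variables of a
position all lie in its cluster, and a diagonal variable `X_{d i}` lies in the cluster of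
`(i, i)`. Since at most `ℓ - h` variables are off-diagonal, `rank L ≥ n - (ℓ - h) - δ(M)`.
Dividing out the scalar direction `(1, …, 1)` leaves a torus of rank `rank L - 1`, which acts
faithfully because saturation gives the basis of `L ⧸ ℤ ∙ 1` an integral left inverse.
-/

open MvPolynomial Relation

/-- The linear substitution of variables `X_i ↦ Σ_j g_{ij} X_j` determined by a matrix `g`,
applied to a polynomial `f`. -/
noncomputable def substMat {k : Type*} [CommSemiring k] {n : ℕ}
    (g : Matrix (Fin n) (Fin n) k) (f : MvPolynomial (Fin n) k) : MvPolynomial (Fin n) k :=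
  aeval (fun i => ∑ j, C (g i j) * X j) f

/-- A matrix is scalar if it is a scalar multiple of the identity. -/
def IsScalarMat {k : Type*} [CommSemiring k] {n : ℕ} (g : Matrix (Fin n) (Fin n) k) : Prop :=
  ∃ c : k, g = c • (1 : Matrix (Fin n) (Fin n) k)

/-- The setoid of clusters: on the set of positions `(i,j)`, `i ≤ j`, with `M_{ij} ≠ 0`, the
equivalence relation generated by relating two positions whenever some variable occurs (with
nonzero coefficient) in both entries.  Its classes are the clusters. -/
def clusterSetoid {k : Type*} [Field k] {n h : ℕ}
    (M : Matrix (Fin h) (Fin h) (MvPolynomial (Fin n) k)) :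
    Setoid {p : Fin h × Fin h // p.1 ≤ p.2 ∧ M p.1 p.2 ≠ 0} :=
  EqvGen.setoid (fun p q => ∃ v : Fin n,
    v ∈ (M p.val.1 p.val.2).vars ∧ v ∈ (M q.val.1 q.val.2).vars)

/-- The excess `δ(M) = Σ_{clusters C} (|C| − 1) + #{excessive positions}`, where a position
`(i,j)` (with `i ≤ j`, `M_{ij} ≠ 0`) is excessive if the diagonal variable `M_{ii} = X_{d i}`
or the diagonal variable `M_{jj} = X_{d j}` does not occur with nonzero coefficient
in `M_{ij}`. -/
noncomputable def matrixExcess {k : Type*} [Field k] {n h : ℕ}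
    (M : Matrix (Fin h) (Fin h) (MvPolynomial (Fin n) k)) (d : Fin h → Fin n) : ℕ :=
  (∑ᶠ c : Quotient (clusterSetoid M),
    (Nat.card {p : {p : Fin h × Fin h // p.1 ≤ p.2 ∧ M p.1 p.2 ≠ 0} //
      Quotient.mk (clusterSetoid M) p = c} - 1)) +
  Nat.card {p : {p : Fin h × Fin h // p.1 ≤ p.2 ∧ M p.1 p.2 ≠ 0} //
    d p.val.1 ∉ (M p.val.1 p.val.2).vars ∨ d p.val.2 ∉ (M p.val.1 p.val.2).vars}


section TorusHom

variable {G : Type*} [CommGroup G] {ι κ μ : Type*} [Fintype ι]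

def prodZPowHom (t : ι → G) : Multiplicative (ι → ℤ) →* G where
  toFun a := ∏ m, t m ^ a.toAdd m
  map_one' := by simp
  map_mul' a b := by simp [zpow_add, Finset.prod_mul_distrib]

theorem prodZPowHom_ofAdd (t : ι → G) (a : ι → ℤ) :
    prodZPowHom t (.ofAdd a) = ∏ m, t m ^ a m := rfl

def Matrix.torusHom (W : Matrix κ ι ℤ) : (ι → G) →* (κ → G) where
  toFun t v := prodZPowHom t (.ofAdd (W v))
  map_one' := by ext; simp [prodZPowHom_ofAdd]
  map_mul' t t' := by ext; simp [prodZPowHom_ofAdd, mul_zpow, Finset.prod_mul_distrib]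

namespace Matrix

theorem torusHom_apply (W : Matrix κ ι ℤ) (t : ι → G) (v : κ) :
    torusHom W t v = prodZPowHom t (.ofAdd (W v)) := rfl

theorem prodZPowHom_torusHom [Fintype κ] (W : Matrix κ ι ℤ) (t : ι → G) (a : κ → ℤ) :
    prodZPowHom (torusHom W t) (.ofAdd a) = prodZPowHom t (.ofAdd (a ᵥ* W)) := by
  have : a ᵥ* W = ∑ v, a v • W v := by
    ext m; simp [vecMul, dotProduct, Finset.sum_apply]
  rw [this, ofAdd_sum, map_prod, prodZPowHom_ofAdd]
  exact Finset.prod_congr rfl fun v _ => by rw [ofAdd_zsmul, map_zpow, torusHom_apply]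

theorem torusHom_mul [Fintype κ] (B : Matrix μ κ ℤ) (W : Matrix κ ι ℤ) (t : ι → G) :
    torusHom (B * W) t = torusHom B (torusHom W t) := by
  ext m
  simp only [torusHom_apply, prodZPowHom_torusHom]
  rfl

theorem torusHom_one [DecidableEq ι] (t : ι → G) : torusHom (1 : Matrix ι ι ℤ) t = t := by
  ext m
  simp [torusHom_apply, prodZPowHom_ofAdd, one_apply]

theorem torusHom_const [Fintype κ] (B : Matrix μ κ ℤ) (c : G) :
    torusHom B (fun _ => c) = fun m => c ^ (B *ᵥ 1) m := by
  ext m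
  simp only [torusHom_apply, prodZPowHom_ofAdd, mulVec, dotProduct, Pi.one_apply, mul_one]
  have := map_prod (zpowersHom G c) (fun v => .ofAdd (B m v)) .univ
  rw [← ofAdd_sum] at this
  simpa only [zpowersHom_apply, toAdd_ofAdd] using this.symm

theorem eq_one_of_torusHom_eq_const [Fintype κ] [DecidableEq ι] {W : Matrix κ ι ℤ}
    {B : Matrix ι κ ℤ} (hBW : B * W = 1) (hB : B *ᵥ 1 = 0) {t : ι → G} {c : G}
    (h : torusHom W t = fun _ => c) : t = 1 := by
  rw [← torusHom_one t, ← hBW, torusHom_mul, h, torusHom_const, hB]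
  ext; simp

end Matrix

end TorusHom

namespace Matrix

variable (ι R : Type*) [Fintype ι] [DecidableEq ι] [CommRing R]

def diagonalUnits : (ι → Rˣ) →* (Matrix ι ι R)ˣ :=
  (Units.map (diagonalRingHom ι R).toMonoidHom).comp MulEquiv.piUnits.symm.toMonoidHom

variable {ι R} in
theorem coe_diagonalUnits (u : ι → Rˣ) :
    (diagonalUnits ι R u : Matrix ι ι R) = diagonal fun v => (u v : R) := rfl

end Matrix

namespace MvPolynomial

variable {R σ A : Type*} [CommRing R]

theorem isWeightedHomogeneous_of_isHomogeneous_one [AddCommMonoid A] {φ : MvPolynomial σ R}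
    (hφ : φ.IsHomogeneous 1) {w : σ → A} {c : A} (hw : ∀ v ∈ φ.vars, w v = c) :
    IsWeightedHomogeneous w φ c := by
  intro s hs
  have hdeg : s.degree = 1 := by rw [Finsupp.degree_eq_weight_one]; exact hφ hs
  obtain ⟨v, rfl⟩ := Finsupp.range_single_one.ge hdeg
  rw [Finsupp.weight_single, one_smul]
  exact hw v ((mem_vars_iff_mem_support v).2 ⟨_, mem_support_iff.2 hs, by simp⟩)

theorem IsWeightedHomogeneous.of_nsmul [AddCommMonoid A] [IsAddTorsionFree A] {w : σ → A}
    {φ : MvPolynomial σ R} {D : A} {k : ℕ} (hk : k ≠ 0)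
    (h : IsWeightedHomogeneous (k • w) φ (k • D)) : IsWeightedHomogeneous w φ D := by
  intro s hs
  refine IsAddTorsionFree.nsmul_right_injective hk ?_
  simp only [← h hs, Finsupp.weight_apply, Finsupp.smul_sum, Pi.smul_apply, smul_comm k]

theorem isWeightedHomogeneous_det [AddCommMonoid A] {ι : Type*} [Fintype ι] [DecidableEq ι]
    {M : Matrix ι ι (MvPolynomial σ R)} {w : σ → A} {a b : ι → A}
    (hM : ∀ i j, IsWeightedHomogeneous w (M i j) (a i + b j)) :
    IsWeightedHomogeneous w M.det (∑ i, a i + ∑ i, b i) := by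
  rw [Matrix.det_apply]
  refine IsWeightedHomogeneous.sum _ _ _ fun e _ => ?_
  have hprod := IsWeightedHomogeneous.prod .univ _ _ fun i _ => hM (e i) i
  rw [Finset.sum_add_distrib, Equiv.sum_comp e a] at hprod
  rw [← mem_weightedHomogeneousSubmodule] at hprod ⊢
  exact Submodule.smul_of_tower_mem _ _ hprod

theorem isWeightedHomogeneous_det_of_two_nsmul [AddCommGroup A] [IsAddTorsionFree A]
    {ι : Type*} [Fintype ι] [DecidableEq ι] {M : Matrix ι ι (MvPolynomial σ R)}
    (hM : ∀ i j, (M i j).IsHomogeneous 1) {w : σ → A} {c : ι → A}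
    (hw : ∀ i j, ∀ v ∈ (M i j).vars, 2 • w v = c i + c j) :
    IsWeightedHomogeneous w M.det (∑ i, c i) := by
  have h := isWeightedHomogeneous_det (w := 2 • w) fun i j =>
    isWeightedHomogeneous_of_isHomogeneous_one (hM i j) (hw i j)
  rw [← two_nsmul] at h
  exact h.of_nsmul two_ne_zero

theorem IsWeightedHomogeneous.aeval_C_mul_X [AddCommMonoid A] {w : σ → A}
    {φ : MvPolynomial σ R} {D : A} (hφ : IsWeightedHomogeneous w φ D)
    (χ : Multiplicative A →* R) :
    aeval (fun v => C (χ (.ofAdd (w v))) * X v) φ = C (χ (.ofAdd D)) * φ := by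
  induction hφ using IsWeightedHomogeneous.induction_on with
  | zero => simp
  | add p q _ _ hp hq => rw [map_add, hp, hq, mul_add]
  | monomial s r hs =>
    have hD : s.prod (fun v e => Multiplicative.ofAdd (w v) ^ e) = .ofAdd D := by
      simp [← hs, Finsupp.weight_apply, Finsupp.sum, Finsupp.prod, ofAdd_sum, ofAdd_nsmul]
    rw [aeval_monomial, monomial_eq]
    simp only [mul_pow, Finsupp.prod_mul, ← map_pow, ← map_finsuppProd, hD, algebraMap_eq]
    ring

end MvPolynomial

section Lattice

open Module Matrix

theorem LinearMap.finrank_le_finrank_ker_add {R V N : Type*} [CommRing R] [IsDomain R]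
    [AddCommGroup V] [Module R V] [Module.Finite R V] [AddCommGroup N]
    [Module R N] [Module.Finite R N] (f : V →ₗ[R] N) :
    finrank R V ≤ finrank R (ker f) + finrank R N := by
  rw [← (ker f).finrank_quotient_add_finrank, add_comm]
  gcongr
  refine LinearMap.finrank_le_finrank_of_injective (f := (ker f).liftQ f le_rfl) ?_
  rw [← ker_eq_bot]
  exact Submodule.ker_liftQ_eq_bot _ _ _ le_rfl

theorem LinearMap.isTorsionFree_quotient_ker {R V N : Type*} [Ring R] [AddCommGroup V]
    [Module R V] [AddCommGroup N] [Module R N] [IsTorsionFree R N] (f : V →ₗ[R] N) :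
    IsTorsionFree R (V ⧸ ker f) := by
  refine Function.Injective.moduleIsTorsionFree _ ?_ (map_smul ((ker f).liftQ f le_rfl))
  rw [← ker_eq_bot]
  exact Submodule.ker_liftQ_eq_bot _ _ _ le_rfl

variable {R V : Type*} [CommRing R] [IsDomain R] [IsPrincipalIdealRing R] [AddCommGroup V]
  [Module R V] [Module.Finite R V]

theorem Submodule.exists_mkQ_comp_eq_id (L : Submodule R V) [IsTorsionFree R (V ⧸ L)] :
    ∃ s : V ⧸ L →ₗ[R] V, L.mkQ ∘ₗ s = LinearMap.id := by
  have : Free R (V ⧸ L) := free_of_finite_type_torsion_free'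
  exact projective_lifting_property _ _ L.mkQ_surjective

theorem Submodule.exists_retraction (L : Submodule R V) [IsTorsionFree R (V ⧸ L)] :
    ∃ π : V →ₗ[R] L, ∀ x : L, π x = x := by
  obtain ⟨s, hs⟩ := L.exists_mkQ_comp_eq_id
  have hmem (x : V) : x - s (L.mkQ x) ∈ L := by
    rw [← Submodule.Quotient.mk_eq_zero, ← mkQ_apply, map_sub, ← LinearMap.comp_apply, hs,
      LinearMap.id_apply, sub_self]
  refine ⟨(LinearMap.id - s ∘ₗ L.mkQ).codRestrict L hmem, fun x => ?_⟩
  ext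
  simp [(Submodule.Quotient.mk_eq_zero L).2 x.2]

theorem isTorsionFree_quotient_span_one {ι : Type*} (L : Submodule ℤ (ι → ℤ)) (h1 : 1 ∈ L) :
    IsTorsionFree ℤ (L ⧸ ℤ ∙ (⟨1, h1⟩ : L)) := by
  refine isTorsionFree_iff_smul_eq_zero.2 fun c q hcq => ?_
  induction q using Submodule.Quotient.induction_on with | _ y
  rw [← Submodule.Quotient.mk_smul, Submodule.Quotient.mk_eq_zero,
    Submodule.mem_span_singleton] at hcq
  obtain ⟨a, ha⟩ := hcq
  rcases eq_or_ne c 0 with hc | hc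
  · exact .inl hc
  have hy (v : ι) : c * y.1 v = a := by simpa using (congrFun (congrArg Subtype.val ha) v).symm
  refine .inr ((Submodule.Quotient.mk_eq_zero _).2 (Submodule.mem_span_singleton.2 ?_))
  rcases isEmpty_or_nonempty ι with hι | ⟨⟨v₀⟩⟩
  · exact ⟨0, Subtype.ext (Subsingleton.elim _ _)⟩
  · refine ⟨y.1 v₀, Subtype.ext (funext fun v => ?_)⟩
    simpa using mul_left_cancel₀ hc ((hy v₀).trans (hy v).symm)

/-- `W` lifts a basis of `L ⧸ ℤ ∙ 1`, and `B` is the coordinate map of that basis composed with a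
retraction onto `L`, which exists because `L` is saturated. -/
theorem Submodule.exists_columns_leftInverse_vanishing_one {n : ℕ} (L : Submodule ℤ (Fin n → ℤ))
    [IsTorsionFree ℤ ((Fin n → ℤ) ⧸ L)] (h1 : 1 ∈ L) :
    ∃ (r : ℕ) (W : Matrix (Fin n) (Fin r) ℤ) (B : Matrix (Fin r) (Fin n) ℤ),
      finrank ℤ L ≤ r + 1 ∧ (∀ m, Wᵀ m ∈ L) ∧ B * W = 1 ∧ B *ᵥ 1 = 0 := by
  obtain ⟨π, hπ⟩ := L.exists_retraction
  set N : Submodule ℤ L := ℤ ∙ ⟨1, h1⟩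
  have := isTorsionFree_quotient_span_one L h1
  have : Free ℤ (L ⧸ N) := free_of_finite_type_torsion_free'
  obtain ⟨s, hs⟩ := N.exists_mkQ_comp_eq_id
  have hs' (q : L ⧸ N) : N.mkQ (s q) = q := LinearMap.congr_fun hs q
  let b := finBasis ℤ (L ⧸ N)
  let F : (Fin n → ℤ) →ₗ[ℤ] Fin _ → ℤ := b.equivFun.toLinearMap ∘ₗ N.mkQ ∘ₗ π
  let G : (Fin _ → ℤ) →ₗ[ℤ] Fin n → ℤ := L.subtype ∘ₗ s ∘ₗ b.equivFun.symm.toLinearMap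
  have hFG : F ∘ₗ G = LinearMap.id := by
    refine LinearMap.ext fun x => ?_
    simp only [F, G, LinearMap.comp_apply, Submodule.subtype_apply, hπ, hs', LinearEquiv.coe_coe,
      LinearEquiv.apply_symm_apply, LinearMap.id_apply]
  have hF1 : F 1 = 0 := by
    have : π 1 = ⟨1, h1⟩ := hπ ⟨1, h1⟩
    simp [F, this, N, (Submodule.Quotient.mk_eq_zero N).2 (mem_span_singleton_self _)]
  refine ⟨_, LinearMap.toMatrix' G, LinearMap.toMatrix' F, ?_, fun m => ?_, ?_, ?_⟩
  · rw [← N.finrank_quotient_add_finrank]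
    gcongr
    simpa using finrank_span_le_card ({⟨1, h1⟩} : Set L)
  · have : (LinearMap.toMatrix' G)ᵀ m = G (Pi.single m 1) := by
      ext v; simp [LinearMap.toMatrix'_apply]
    rw [this]
    exact (s _).2
  · rw [← LinearMap.toMatrix'_comp, hFG, LinearMap.toMatrix'_id]
  · rw [LinearMap.toMatrix'_mulVec, hF1]

end Lattice

section Constraints

open scoped Classical

variable {k : Type*} [Field k] {n h : ℕ}

def pairSum (d : Fin h → Fin n) (p : Fin h × Fin h) : (Fin n → ℤ) →ₗ[ℤ] ℤ :=
  (LinearMap.proj (d p.1) : (Fin n → ℤ) →ₗ[ℤ] ℤ) + LinearMap.proj (d p.2)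

variable (M : Matrix (Fin h) (Fin h) (MvPolynomial (Fin n) k)) (d : Fin h → Fin n)

abbrev UpperPosition : Type := {p : Fin h × Fin h // p.1 ≤ p.2 ∧ M p.1 p.2 ≠ 0}

variable {M} in
def cluster (p : UpperPosition M) : Quotient (clusterSetoid M) := Quotient.mk _ p

abbrev OffDiagonalVar : Type :=
  {v : Fin n // v ∉ Set.range d ∧ ∃ p : UpperPosition M, v ∈ (M p.1.1 p.1.2).vars}

abbrev NonRepresentative : Type :=
  Σ c : Quotient (clusterSetoid M), {p : UpperPosition M // cluster p = c ∧ p ≠ c.out}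

noncomputable def constraintMap :
    (Fin n → ℤ) →ₗ[ℤ] (OffDiagonalVar M d → ℤ) × (NonRepresentative M → ℤ) :=
  (LinearMap.pi fun a =>
      2 • (LinearMap.proj a.1 : (Fin n → ℤ) →ₗ[ℤ] ℤ) - pairSum d a.2.2.choose.1).prod
    (LinearMap.pi fun x => pairSum d x.2.1.1 - pairSum d x.1.out.1)

variable {M d}

theorem mem_ker_constraintMap {w : Fin n → ℤ} :
    w ∈ LinearMap.ker (constraintMap M d) ↔
      (∀ a : OffDiagonalVar M d, 2 * w a.1 = pairSum d a.2.2.choose.1 w) ∧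
      ∀ x : NonRepresentative M, pairSum d x.2.1.1 w = pairSum d x.1.out.1 w := by
  simp [constraintMap, funext_iff, sub_eq_zero]

theorem one_mem_ker_constraintMap : 1 ∈ LinearMap.ker (constraintMap M d) :=
  mem_ker_constraintMap.2 ⟨fun _ => by simp [pairSum], fun _ => by simp [pairSum]⟩

theorem pairSum_eq_of_cluster_eq {w : Fin n → ℤ} (hw : w ∈ LinearMap.ker (constraintMap M d))
    {p q : UpperPosition M} (hpq : cluster p = cluster q) : pairSum d p.1 w = pairSum d q.1 w := by
  have hrep (p : UpperPosition M) : pairSum d p.1 w = pairSum d (cluster p).out.1 w := by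
    by_cases hp : p = (cluster p).out
    · rw [← hp]
    · exact (mem_ker_constraintMap.1 hw).2 ⟨cluster p, p, rfl, hp⟩
  rw [hrep p, hrep q, hpq]

theorem cluster_eq_of_mem_vars {p q : UpperPosition M} {v : Fin n}
    (hp : v ∈ (M p.1.1 p.1.2).vars) (hq : v ∈ (M q.1.1 q.1.2).vars) : cluster p = cluster q :=
  Quotient.sound (EqvGen.rel p q ⟨v, hp, hq⟩)

theorem two_mul_eq_of_mem_ker_constraintMap (hsymm : M.IsSymm) (hdiag : ∀ i, M i i = X (d i))
    {w : Fin n → ℤ} (hw : w ∈ LinearMap.ker (constraintMap M d)) (i j : Fin h) :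
    ∀ v ∈ (M i j).vars, 2 * w v = w (d i) + w (d j) := by
  wlog hij : i ≤ j generalizing i j
  · intro v hv
    rw [← hsymm.apply i j] at hv
    rw [this j i (le_of_not_ge hij) v hv, add_comm]
  intro v hv
  let p : UpperPosition M := ⟨(i, j), hij, by rintro h0; simp [h0] at hv⟩
  by_cases hvd : v ∈ Set.range d
  · obtain ⟨i₀, rfl⟩ := hvd
    let q : UpperPosition M := ⟨(i₀, i₀), le_rfl, by simp [hdiag]⟩
    have hq : d i₀ ∈ (M i₀ i₀).vars := by simp [hdiag, vars_X]
    have := pairSum_eq_of_cluster_eq hw (cluster_eq_of_mem_vars (p := p) (q := q) hv hq)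
    simp only [pairSum, LinearMap.add_apply, LinearMap.proj_apply, p, q] at this
    omega
  · let a : OffDiagonalVar M d := ⟨v, hvd, p, hv⟩
    rw [(mem_ker_constraintMap.1 hw).1 a,
      pairSum_eq_of_cluster_eq hw (cluster_eq_of_mem_vars a.2.2.choose_spec (q := p) hv)]
    rfl

theorem card_offDiagonalVar_add_le {ℓ : ℕ} (hd : Function.Injective d)
    (hdiag : ∀ i, M i i = X (d i)) (hvars : ∀ i j, ∀ v ∈ (M i j).vars, (v : ℕ) < ℓ) :
    Fintype.card (OffDiagonalVar M d) + h ≤ ℓ := by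
  have hdℓ (i : Fin h) : (d i : ℕ) < ℓ := hvars i i (d i) (by simp [hdiag])
  let f : OffDiagonalVar M d ⊕ Fin h → Fin ℓ :=
    Sum.elim (fun a => ⟨a.1, hvars _ _ _ a.2.2.choose_spec⟩) (fun i => ⟨d i, hdℓ i⟩)
  have hf : Function.Injective f := by
    refine Function.Injective.sumElim (fun a b hab => ?_) (fun i j hij => ?_) fun a i hai => ?_
    · exact Subtype.ext (Fin.ext (Fin.mk.inj_iff.1 hab))
    · exact hd (Fin.ext (Fin.mk.inj_iff.1 hij))
    · exact a.2.1 ⟨i, Fin.ext (Fin.mk.inj_iff.1 hai).symm⟩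
  simpa using Fintype.card_le_of_injective f hf

theorem card_nonRepresentative_le_matrixExcess :
    Fintype.card (NonRepresentative M) ≤ matrixExcess M d := by
  rw [matrixExcess, finsum_eq_sum_of_fintype, Fintype.card_sigma]
  refine le_add_right (Finset.sum_le_sum fun c _ => le_of_eq ?_)
  have hout : c.out ∈ Finset.univ.filter fun p => cluster p = c :=
    Finset.mem_filter.2 ⟨Finset.mem_univ _, Quotient.out_eq c⟩
  rw [Nat.card_eq_fintype_card, Fintype.card_subtype, Fintype.card_subtype, ← Finset.filter_filter,
    Finset.filter_ne', Finset.card_erase_of_mem hout]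
  rfl

end Constraints

section DiagonalAction

open Matrix

variable {R : Type*} [CommRing R] {n : ℕ}

theorem substMat_diagonal (c : Fin n → R) (f : MvPolynomial (Fin n) R) :
    substMat (diagonal c) f = aeval (fun v => C (c v) * X v) f := by
  simp [substMat, diagonal_apply, apply_ite C, ite_mul]

theorem exists_eq_const_of_isScalarMat_diagonal {u : Fin n → Rˣ}
    (hu : IsScalarMat (diagonal fun v => (u v : R))) : ∃ c : Rˣ, u = fun _ => c := by
  obtain ⟨c, hc⟩ := hu
  rcases isEmpty_or_nonempty (Fin n) with hn | ⟨⟨v₀⟩⟩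
  · exact ⟨1, Subsingleton.elim _ _⟩
  refine ⟨u v₀, funext fun v => Units.ext ?_⟩
  have hcoord (v : Fin n) : (u v : R) = c := by simpa using congrFun (congrFun hc v) v
  rw [hcoord, hcoord]

theorem substMat_torusHom_det {h r : ℕ} {M : Matrix (Fin h) (Fin h) (MvPolynomial (Fin n) R)}
    (hM : ∀ i j, (M i j).IsHomogeneous 1) {d : Fin h → Fin n} {W : Matrix (Fin n) (Fin r) ℤ}
    (hW : ∀ i j, ∀ v ∈ (M i j).vars, 2 • W v = W (d i) + W (d j)) (t : Fin r → Rˣ) :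
    substMat (diagonalUnits (Fin n) R (torusHom W t) : Matrix (Fin n) (Fin n) R) M.det =
      (prodZPowHom t (.ofAdd (∑ i, W (d i))) : R) • M.det := by
  rw [coe_diagonalUnits, substMat_diagonal, smul_eq_C_mul]
  exact (isWeightedHomogeneous_det_of_two_nsmul hM hW).aeval_C_mul_X
    ((Units.coeHom R).comp (prodZPowHom t))

end DiagonalAction

theorem torus_action_with_excess_general {k : Type*} [Field k] {n h ℓ : ℕ}
    (M : Matrix (Fin h) (Fin h) (MvPolynomial (Fin n) k))
    (hsymm : M.IsSymm)
    (hhom : ∀ i j : Fin h, (M i j).IsHomogeneous 1)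
    (hvars : ∀ i j : Fin h, ∀ v ∈ (M i j).vars, (v : ℕ) < ℓ)
    (d : Fin h → Fin n) (hd : Function.Injective d)
    (hdiag_var : ∀ i : Fin h, M i i = X (d i)) :
    ∃ r : ℕ, max 0 ((h : ℤ) - 1 + (n : ℤ) - (ℓ : ℤ) - (matrixExcess M d : ℤ)) ≤ (r : ℤ) ∧
      ∃ φ : (Fin r → kˣ) →* (Matrix (Fin n) (Fin n) k)ˣ,
        -- diagonal in the coordinates X₁,…,Xₙ
        (∀ t : Fin r → kˣ, Matrix.IsDiag ((φ t : Matrix (Fin n) (Fin n) k))) ∧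
        -- the action preserves the hypersurface {det M = 0}
        (∀ t : Fin r → kˣ, ∃ c : kˣ,
          substMat ((φ t : Matrix (Fin n) (Fin n) k)) M.det = (c : k) • M.det) ∧
        -- faithfulness
        (∀ t : Fin r → kˣ, IsScalarMat ((φ t : Matrix (Fin n) (Fin n) k)) → t = 1) := by
  classical
  have := (constraintMap M d).isTorsionFree_quotient_ker
  obtain ⟨r, W, B, hrank, hWker, hBW, hB1⟩ :=
    (LinearMap.ker (constraintMap M d)).exists_columns_leftInverse_vanishing_one
      one_mem_ker_constraintMap
  have hW (i j : Fin h) (v : Fin n) (hv : v ∈ (M i j).vars) : 2 • W v = W (d i) + W (d j) :=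
    funext fun m => by
      simpa [two_mul] using two_mul_eq_of_mem_ker_constraintMap hsymm hdiag_var (hWker m) i j v hv
  refine ⟨r, ?_, (Matrix.diagonalUnits (Fin n) k).comp (Matrix.torusHom W),
    fun t => Matrix.isDiag_diagonal _,
    fun t => ⟨_, substMat_torusHom_det hhom hW t⟩, fun t ht => ?_⟩
  · have hker := (constraintMap M d).finrank_le_finrank_ker_add
    simp only [Module.finrank_prod, Module.finrank_fintype_fun_eq_card, Fintype.card_fin] at hker
    have := card_offDiagonalVar_add_le hd hdiag_var hvars
    have := card_nonRepresentative_le_matrixExcess (M := M) (d := d)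
    omega
  · obtain ⟨c, hc⟩ := exists_eq_const_of_isScalarMat_diagonal (u := Matrix.torusHom W t) ht
    exact Matrix.eq_one_of_torusHom_eq_const hBW hB1 hc

/-- Let `k` be an infinite field and `M` a symmetric `h×h` matrix of homogeneous
linear forms in `k[X₁,…,Xₙ]` whose diagonal entries are nonzero and linearly independent;
`ℓ(M)` is the dimension of the span of all upper-triangular entries.  Assume coordinates are
chosen so that each nonzero entry of `M` is a linear form in the variables `X₁,…,X_{ℓ(M)}`
(i.e. only the first `ℓ(M)` variables occur in entries of `M`), with the `h` diagonal entries
being `h` distinct variables.  With `δ(M)` the excess of `M`, the hypersurface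
`X = {det M = 0} ⊆ P^{n−1}(k)` admits a linear, faithful torus action, diagonal in the
coordinates `X₁,…,Xₙ`, of rank at least `max(0, h − 1 + n − ℓ(M) − δ(M))`. -/
theorem torus_action_with_excess {k : Type*} [Field k] [Infinite k] {n h ℓ : ℕ}
    (M : Matrix (Fin h) (Fin h) (MvPolynomial (Fin n) k))
    (hsymm : M.IsSymm)
    (hhom : ∀ i j : Fin h, (M i j).IsHomogeneous 1)
    (hdiag_ne : ∀ i : Fin h, M i i ≠ 0)
    (hdiag_ind : LinearIndependent k (fun i : Fin h => M i i))
    (hℓ : ℓ = Module.finrank k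
      (Submodule.span k {f : MvPolynomial (Fin n) k | ∃ i j : Fin h, i ≤ j ∧ f = M i j}))
    (hvars : ∀ i j : Fin h, ∀ v ∈ (M i j).vars, (v : ℕ) < ℓ)
    (d : Fin h → Fin n) (hd : Function.Injective d)
    (hdiag_var : ∀ i : Fin h, M i i = X (d i)) :
    ∃ r : ℕ, max 0 ((h : ℤ) - 1 + (n : ℤ) - (ℓ : ℤ) - (matrixExcess M d : ℤ)) ≤ (r : ℤ) ∧
      ∃ φ : (Fin r → kˣ) →* (Matrix (Fin n) (Fin n) k)ˣ,
        -- diagonal in the coordinates X₁,…,Xₙ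
        (∀ t : Fin r → kˣ, Matrix.IsDiag ((φ t : Matrix (Fin n) (Fin n) k))) ∧
        -- the action preserves the hypersurface {det M = 0}
        (∀ t : Fin r → kˣ, ∃ c : kˣ,
          substMat ((φ t : Matrix (Fin n) (Fin n) k)) M.det = (c : k) • M.det) ∧
        -- faithfulness
        (∀ t : Fin r → kˣ, IsScalarMat ((φ t : Matrix (Fin n) (Fin n) k)) → t = 1) :=
  torus_action_with_excess_general M hsymm hhom hvars d hd hdiag_var
end

section
/- Let k be a field of characteristic 0, Γ a finite connected multigraph with h₁(Γ) ≥ 1, and B any ℤ-basis of H₁(Γ,ℤ). Then the h₁(Γ) diagonal entries of the matrix M(Γ)_B are linearly independent elements of the space of linear forms k[X_e : e ∈ E(Γ)]₁. -/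
/-- A finite multigraph with an orientation of its edges: vertex type `V`, edge type `E`,
each edge `e` having a source `src e` and a target `tgt e`. -/
structure Multigraph (V E : Type) where
  src : E → V
  tgt : E → V

namespace Multigraph

/-- Two vertices are adjacent via an edge satisfying the predicate `P` (ignoring
orientation). -/
def Adj {V E : Type} (G : Multigraph V E) (P : E → Prop) (a b : V) : Prop :=
  ∃ e, P e ∧ ((G.src e = a ∧ G.tgt e = b) ∨ (G.src e = b ∧ G.tgt e = a))

/-- All vertices are joined by walks using only edges satisfying `P`. -/
def ConnectedOn {V E : Type} (G : Multigraph V E) (P : E → Prop) : Prop :=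
  ∀ a b : V, Relation.ReflTransGen (G.Adj P) a b

/-- The multigraph is connected. -/
def Connected {V E : Type} (G : Multigraph V E) : Prop :=
  Nonempty V ∧ G.ConnectedOn fun _ => True

/-- `T` is (the edge set of) a spanning tree: connecting all vertices, with
`#T = #V − 1` edges. -/
def IsSpanningTree {V E : Type} [Fintype V] (G : Multigraph V E) (T : Finset E) : Prop :=
  G.ConnectedOn (· ∈ T) ∧ T.card + 1 = Fintype.card V

open MvPolynomial in
open Classical in
/-- The graph (Kirchhoff) polynomial `P(Γ) = Σ_T ∏_{e ∉ T} X_e`, the sum being over all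
spanning trees `T` of `Γ` (it is `0` if there is no spanning tree). -/
noncomputable def graphPolynomial {V E : Type} (k : Type*) [CommRing k] [Fintype V]
    [Fintype E] (G : Multigraph V E) : MvPolynomial E k :=
  ∑ T ∈ Finset.univ.filter (fun T : Finset E => G.IsSpanningTree T), ∏ e ∈ Tᶜ, X e

open Classical in
/-- The boundary map `∂ : R^E → R^V`, sending an edge to (source) − (target). -/
noncomputable def boundary {V E : Type} (G : Multigraph V E) (R : Type*) [CommRing R]
    [Fintype E] : (E → R) →ₗ[R] (V → R) where
  toFun x v := ∑ e, x e * ((if G.src e = v then 1 else 0) - (if G.tgt e = v then 1 else 0))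
  map_add' x y := by
    funext v
    simp [add_mul, Finset.sum_add_distrib]
  map_smul' c x := by
    funext v
    simp [Finset.mul_sum, mul_assoc]

/-- The cycle space `H₁(Γ, R) = ker ∂`. -/
noncomputable def cycleSpace {V E : Type} (G : Multigraph V E) (R : Type*) [CommRing R]
    [Fintype E] : Submodule R (E → R) :=
  LinearMap.ker (G.boundary R)

open MvPolynomial in
/-- The matrix `M(Γ)_B = Σ_e X_e M_e` associated to a `ℤ`-basis `B` of `H₁(Γ, ℤ)`, where
`M_e` is the Gram matrix of the rank-1 bilinear form `b_e = (l_e·)(l_e·)` in the basis `B`;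
its `(i,j)` entry is the linear form `Σ_e (B i)_e (B j)_e X_e`, with coefficients cast
into `k`. -/
noncomputable def graphMatrix {V E : Type} (G : Multigraph V E) (k : Type*) [CommRing k]
    [Fintype E] {ι : Type*} (B : Module.Basis ι ℤ (G.cycleSpace ℤ)) :
    Matrix ι ι (MvPolynomial E k) :=
  Matrix.of fun i j => ∑ e, C ((((B i).val e * (B j).val e : ℤ) : k)) * X e

/-- The vertex `v` is an endpoint of some edge in `S`. -/
def touches {V E : Type} (G : Multigraph V E) (S : Set E) (v : V) : Prop :=
  ∃ e ∈ S, G.src e = v ∨ G.tgt e = v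

/-- The vertex set of the subgraph spanned by the edge set `S`. -/
def verts {V E : Type} (G : Multigraph V E) (S : Set E) : Set V :=
  {v | G.touches S v}

/-- The subgraph spanned by the edge set `S` is connected. -/
def EdgeConnected {V E : Type} (G : Multigraph V E) (S : Set E) : Prop :=
  ∀ a b : V, G.touches S a → G.touches S b → Relation.ReflTransGen (G.Adj (· ∈ S)) a b

open Classical in
/-- The degree of the vertex `v` in the subgraph spanned by the edge set `S`
(a loop counts twice). -/
noncomputable def degreeIn {V E : Type} (G : Multigraph V E) [Fintype E] (S : Set E)
    (v : V) : ℕ :=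
  ∑ e ∈ S.toFinset, ((if G.src e = v then 1 else 0) + (if G.tgt e = v then 1 else 0))

/-- `S` is (the edge set of) a simple cycle: nonempty, connected, and every vertex it
touches has degree exactly 2 in it. -/
def IsSimpleCycle {V E : Type} (G : Multigraph V E) [Fintype E] (S : Set E) : Prop :=
  S.Nonempty ∧ G.EdgeConnected S ∧ ∀ v : V, G.touches S v → G.degreeIn S v = 2

/-- The edge set `S` contains no simple cycle (the subgraph it spans is a forest,
i.e. `h₁ = 0`). -/
def IsAcyclicSet {V E : Type} (G : Multigraph V E) [Fintype E] (S : Set E) : Prop :=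
  ∀ C : Set E, C ⊆ S → ¬G.IsSimpleCycle C

/-- A decomposition of `Γ` as a successive gluing of polygons (simple cycles)
`Δ_0, …, Δ_{h−1}`: each `Δ_i` (for `i > 0`) is glued to the union of the previous
polygons along a nonempty, connected, proper set of edges of `Δ_i`, and no edge is
used twice for gluing. -/
structure PolygonalDecomposition {V E : Type} [Fintype E] (G : Multigraph V E) where
  h : ℕ
  poly : Fin h → Set E
  cycle : ∀ i, G.IsSimpleCycle (poly i)
  covers : ∀ e : E, ∃ i, e ∈ poly i
  glue_nonempty : ∀ i : Fin h, 0 < (i : ℕ) → (poly i ∩ ⋃ j < i, poly j).Nonempty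
  glue_connected : ∀ i : Fin h, 0 < (i : ℕ) → G.EdgeConnected (poly i ∩ ⋃ j < i, poly j)
  glue_proper : ∀ i : Fin h, 0 < (i : ℕ) → poly i ∩ ⋃ j < i, poly j ≠ poly i
  glue_disjoint : ∀ i j : Fin h, i ≠ j →
    Disjoint (poly i ∩ ⋃ l < i, poly l) (poly j ∩ ⋃ l < j, poly l)

/-- The set `E₀` of all edges used for gluing in a polygonal decomposition. -/
def PolygonalDecomposition.glueEdges {V E : Type} [Fintype E] {G : Multigraph V E}
    (D : G.PolygonalDecomposition) : Set E :=
  ⋃ i : Fin D.h, D.poly i ∩ ⋃ j < i, D.poly j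

/-- A polygonal graph: a connected multigraph admitting a polygonal decomposition. -/
def IsPolygonal {V E : Type} [Fintype E] (G : Multigraph V E) : Prop :=
  G.Connected ∧ Nonempty G.PolygonalDecomposition

/-- A `*`-graph: a polygonal graph all of whose polygonal decompositions have acyclic
gluing edge set `E₀` (i.e. `h₁(E₀) = 0`). -/
def IsStarGraph {V E : Type} [Fintype E] (G : Multigraph V E) : Prop :=
  G.IsPolygonal ∧ ∀ D : G.PolygonalDecomposition, G.IsAcyclicSet D.glueEdges

end Multigraph

/-! The diagonal entry `M_ii` is the linear form with coefficient vector `e ↦ (b_i)_e²`, so it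
suffices that the coordinatewise squares of a basis `b_i` of `H₁(Γ, ℤ)` are linearly independent
over `ℤ` (which then persists over any field of characteristic 0). As the image of `∂` is free,
`H₁ = ker ∂` is a direct summand of `ℤ^E`, so the `b_i` remain independent modulo 2, where squaring
is the identity. Hence an integral relation among the squares has only even coefficients, and
halving it gives an infinite descent. -/

open MvPolynomial

theorem LinearMap.exists_retraction_ker {R M N : Type*} [CommRing R] [AddCommGroup M]
    [Module R M] [AddCommGroup N] [Module R N] (f : M →ₗ[R] N)
    [Module.Projective R (LinearMap.range f)] :
    ∃ p : M →ₗ[R] LinearMap.ker f, ∀ x : LinearMap.ker f, p x = x := by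
  obtain ⟨s, hs⟩ := Module.projective_lifting_property f.rangeRestrict LinearMap.id
    f.surjective_rangeRestrict
  let π : M →ₗ[R] M := LinearMap.id - s ∘ₗ f.rangeRestrict
  have hπ : ∀ x, π x ∈ LinearMap.ker f := fun x => by
    have hsx : f (s (f.rangeRestrict x)) = f x := congrArg Subtype.val (LinearMap.congr_fun hs _)
    simp [π, hsx]
  refine ⟨π.codRestrict _ hπ, fun x => Subtype.ext ?_⟩
  have hx : f.rangeRestrict x = 0 := Subtype.ext x.2
  simp [π, hx]

namespace Multigraph

theorem exists_dotProduct_eq_functional {V E : Type} [Fintype E] (G : Multigraph V E)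
    (φ : G.cycleSpace ℤ →ₗ[ℤ] ℤ) : ∃ w : E → ℤ, ∀ x : G.cycleSpace ℤ, w ⬝ᵥ x = φ x := by
  classical
  obtain ⟨p, hp⟩ := (G.boundary ℤ).exists_retraction_ker
  let ψ : (E → ℤ) →ₗ[ℤ] ℤ := (φ.toAddMonoidHom.comp p.toAddMonoidHom).toIntLinearMap
  refine ⟨fun e => ψ (Pi.single e 1), fun x => ?_⟩
  have hψ : ψ x = φ x := congrArg φ (hp x)
  rw [← hψ, LinearMap.pi_apply_eq_sum_univ ψ, dotProduct]
  refine Finset.sum_congr rfl fun e _ => ?_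
  rw [mul_comm, smul_eq_mul]
  congr 2
  ext j
  simp [Pi.single_apply, eq_comm]

theorem graphMatrix_apply {V E : Type} [Fintype E] (G : Multigraph V E) (k : Type*) [CommRing k]
    {ι : Type*} (B : Module.Basis ι ℤ (G.cycleSpace ℤ)) (i j : ι) :
    G.graphMatrix k B i j =
      Fintype.linearCombination k X (fun e => (((B i).val e * (B j).val e : ℤ) : k)) := by
  simp [graphMatrix, Fintype.linearCombination_apply, smul_eq_C_mul]

end Multigraph

section

variable {ι E : Type*} [Fintype ι] [Fintype E] [DecidableEq ι]

theorem two_dvd_of_sum_smul_sq_eq_zero {v : ι → E → ℤ} {w : E → ℤ} {j : ι}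
    (hw : ∀ i, w ⬝ᵥ v i = if i = j then 1 else 0) {c : ι → ℤ}
    (hc : ∑ i, c i • (fun e => v i e ^ 2) = 0) : 2 ∣ c j := by
  -- modulo 2 the relation among the squares is a relation among the `v i`, which `w` detects
  have hmod : ∀ e, ∑ i, (c i : ZMod 2) * v i e = 0 := fun e => by
    have hce : ((∑ i, c i * v i e ^ 2 : ℤ) : ZMod 2) = 0 := by
      simpa using congrArg (fun f => ((f e : ℤ) : ZMod 2)) hc
    push_cast at hce
    simpa only [ZMod.pow_card] using hce
  refine (ZMod.intCast_zmod_eq_zero_iff_dvd (c j) 2).1 ?_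
  calc (c j : ZMod 2) = ∑ i, (c i : ZMod 2) * ((w ⬝ᵥ v i : ℤ) : ZMod 2) := by simp [hw]
    _ = ∑ e, (w e : ZMod 2) * ∑ i, (c i : ZMod 2) * v i e := by
      simp only [dotProduct, Int.cast_sum, Int.cast_mul, Finset.mul_sum]
      rw [Finset.sum_comm]
      exact Finset.sum_congr rfl fun _ _ => Finset.sum_congr rfl fun _ _ => by ring
    _ = 0 := by simp [hmod]

theorem linearIndependent_sq_of_dual {v : ι → E → ℤ}
    (hdual : ∀ j, ∃ w : E → ℤ, ∀ i, w ⬝ᵥ v i = if i = j then 1 else 0) :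
    LinearIndependent ℤ (fun i e => v i e ^ 2) := by
  rw [Fintype.linearIndependent_iff]
  -- infinite descent: halving a relation among the squares gives another relation
  have hdvd : ∀ (n : ℕ) (c : ι → ℤ), ∑ i, c i • (fun e => v i e ^ 2) = 0 → ∀ i, 2 ^ n ∣ c i := by
    intro n
    induction n with
    | zero => simp
    | succ n ih =>
      intro c hc i
      have heven : ∀ j, 2 ∣ c j := fun j =>
        let ⟨_, hw⟩ := hdual j
        two_dvd_of_sum_smul_sq_eq_zero hw hc
      choose c' hc' using heven
      have hrel : ∑ i, c' i • (fun e => v i e ^ 2) = 0 := by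
        refine (smul_eq_zero.mp ?_).resolve_left (two_ne_zero (α := ℤ))
        rw [Finset.smul_sum]
        simpa only [smul_smul, ← hc'] using hc
      rw [hc', pow_succ, mul_comm]
      exact mul_dvd_mul_left 2 (ih c' hrel i)
  intro c hc i
  refine Int.eq_zero_of_abs_lt_dvd (hdvd (c i).natAbs c hc i) ?_
  rw [Int.abs_eq_natAbs]
  exact_mod_cast Nat.lt_two_pow_self

end

theorem graphMatrix_diagonal_linearIndependent_general (k : Type*) [Field k] [CharZero k]
    {V E : Type} [Fintype E] (G : Multigraph V E)
    {ι : Type} [Fintype ι] (B : Module.Basis ι ℤ (G.cycleSpace ℤ)) :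
    LinearIndependent k (fun i : ι => G.graphMatrix k B i i) := by
  classical
  have hdual : ∀ j, ∃ w : E → ℤ, ∀ i, w ⬝ᵥ (B i).val = if i = j then 1 else 0 := fun j => by
    obtain ⟨w, hw⟩ := G.exists_dotProduct_eq_functional (B.coord j)
    exact ⟨w, fun i => by simp [hw, Finsupp.single_apply, eq_comm]⟩
  have hsq : LinearIndependent k (fun i e => (((B i).val e * (B i).val e : ℤ) : k)) := by
    have h := linearIndependent_algebraMap_comp_iff (S := k) |>.2
      (linearIndependent_sq_of_dual hdual)
    simpa only [Function.comp_def, eq_intCast, sq] using h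
  have hX : LinearMap.ker (Fintype.linearCombination k (X : E → MvPolynomial E k)) = ⊥ :=
    LinearMap.ker_eq_bot.2
      (linearIndependent_X (R := k) (σ := E)).fintypeLinearCombination_injective
  simp only [G.graphMatrix_apply]
  exact hsq.map' _ hX

/-- Let `k` be a field of characteristic 0, `Γ` a finite connected multigraph
with `h₁(Γ) ≥ 1`, and `B` any `ℤ`-basis of `H₁(Γ, ℤ)`.  Then the `h₁(Γ)` diagonal entries of
the matrix `M(Γ)_B` are linearly independent elements of the space of linear forms
`k[X_e : e ∈ E(Γ)]₁`. -/
theorem graphMatrix_diagonal_linearIndependent (k : Type*) [Field k] [CharZero k]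
    {V E : Type} [Fintype V] [Fintype E] (G : Multigraph V E) (hG : G.Connected)
    {ι : Type} [Fintype ι] [Nonempty ι] (B : Module.Basis ι ℤ (G.cycleSpace ℤ)) :
    LinearIndependent k (fun i : ι => G.graphMatrix k B i i) :=
  graphMatrix_diagonal_linearIndependent_general k G B
end

section
/- Let Γ be a finite connected multigraph, e ∈ E(Γ), and let Γ' be the graph obtained from Γ by subdividing the edge e into two edges e₁ and e₂ (inserting a new vertex of degree 2 in the middle of e). Then the graph polynomials satisfy P(Γ') = P(Γ)|_{X_e = X_{e₁} + X_{e₂}}, i.e., P(Γ') is obtained from P(Γ) by substituting X_{e₁} + X_{e₂} for the variable X_e. -/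
namespace Multigraph

/-- The graph `Γ'` obtained from `Γ` by subdividing the edge `e` into two edges
`e₁ = Sum.inr false` and `e₂ = Sum.inr true`, inserting the new vertex `none` in the middle
of `e`; the other edges are `Sum.inl f`, `f ≠ e`. -/
def subdivide {V E : Type} (G : Multigraph V E) (e : E) :
    Multigraph (Option V) ({f : E // f ≠ e} ⊕ Bool) where
  src f := match f with
    | Sum.inl f => some (G.src f.1)
    | Sum.inr false => some (G.src e)
    | Sum.inr true => none
  tgt f := match f with
    | Sum.inl f => some (G.tgt f.1)
    | Sum.inr false => none
    | Sum.inr true => some (G.tgt e)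

end Multigraph


/-!
A spanning tree `T'` of the subdivision contains at least one half of `e`, since otherwise the new
vertex is isolated. Keeping `e` exactly when both halves lie in `T'` turns `T'` into a spanning
tree `T` of `Γ`, with one edge fewer. Over a spanning tree `T ∋ e` lies exactly one spanning tree
of the subdivision (both halves); over `T ∌ e` lie exactly two (one half each), whose complement
monomials add up to `(X_{e₁} + X_{e₂}) ∏_{f ∉ T, f ≠ e} X_f`.
-/

namespace Multigraph

open Finset MvPolynomial Relation Function

-- `graphPolynomial` takes complements with respect to classical decidable equality.
open Classical in
theorem graphPolynomial_eq_sum {V E : Type} [Fintype V] [Fintype E] [DecidableEq E]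
    (R : Type*) [CommRing R] (G : Multigraph V E) :
    G.graphPolynomial R = ∑ T ∈ univ.filter G.IsSpanningTree, ∏ f ∈ Tᶜ, X f := by
  unfold graphPolynomial
  congr!

section Subdivision

variable {V E : Type}

instance (G : Multigraph V E) (P : E → Prop) : Std.Symm (G.Adj P) :=
  ⟨fun _ _ ⟨f, hf, h⟩ => ⟨f, hf, h.symm⟩⟩

theorem not_connectedOn_subdivide (G : Multigraph V E) [Nonempty V] {e : E}
    {T' : Finset ({f : E // f ≠ e} ⊕ Bool)} (h : .inr false ∉ T' ∧ .inr true ∉ T') :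
    ¬(G.subdivide e).ConnectedOn (· ∈ T') := fun hc => by
  obtain ⟨v⟩ := ‹Nonempty V›
  rcases (hc none (some v)).cases_head with hv | ⟨x, ⟨f | b, hf, hx⟩, -⟩
  · exact Option.some_ne_none v hv.symm
  · rcases hx with ⟨hx, -⟩ | ⟨-, hx⟩ <;> exact Option.some_ne_none _ hx
  · cases b
    exacts [h.1 hf, h.2 hf]

variable [DecidableEq E] (e : E)

def subdivideEdges (T : Finset E) (s : Finset Bool) : Finset ({f : E // f ≠ e} ⊕ Bool) :=
  (T.subtype (· ≠ e)).disjSum s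

variable [Fintype E]

def unsubdivideEdges (T' : Finset ({f : E // f ≠ e} ⊕ Bool)) : Finset E :=
  univ.filter fun f => if h : f = e then .inr false ∈ T' ∧ .inr true ∈ T' else .inl ⟨f, h⟩ ∈ T'

variable {e} {T' : Finset ({f : E // f ≠ e} ⊕ Bool)}

theorem mem_unsubdivideEdges_self :
    e ∈ unsubdivideEdges e T' ↔ .inr false ∈ T' ∧ .inr true ∈ T' := by
  simp [unsubdivideEdges]

theorem val_mem_unsubdivideEdges {f : {f : E // f ≠ e}} :
    f.1 ∈ unsubdivideEdges e T' ↔ .inl f ∈ T' := by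
  simp [unsubdivideEdges, f.2]

theorem card_unsubdivideEdges_add_one (h : .inr false ∈ T' ∨ .inr true ∈ T') :
    #(unsubdivideEdges e T') + 1 = #T' := by
  have hleft : (unsubdivideEdges e T').erase e = T'.toLeft.map (Embedding.subtype _) := by
    ext f
    by_cases hf : f = e
    · simp [hf]
    · simpa [hf] using val_mem_unsubdivideEdges (f := ⟨f, hf⟩)
  have hright : ∀ s : Finset Bool, false ∈ s ∨ true ∈ s →
      #s = if false ∈ s ∧ true ∈ s then 2 else 1 := by decide
  rw [← card_toLeft_add_card_toRight, hright _ (by simpa using h)]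
  simp only [mem_toRight, ← mem_unsubdivideEdges_self (T' := T')]
  split_ifs with he
  · rw [← card_erase_add_one he, hleft, card_map]
  · rw [← erase_eq_of_notMem he, hleft, card_map]

variable (G : Multigraph V E)

theorem connectedOn_of_connectedOn_subdivide (hc : (G.subdivide e).ConnectedOn (· ∈ T')) :
    G.ConnectedOn (· ∈ unsubdivideEdges e T') := by
  -- the new vertex is sent to an endpoint of `e` joined to it by a half in `T'`
  let c := if .inr false ∈ T' then G.src e else G.tgt e
  have step : (G.subdivide e).Adj (· ∈ T') ≤
      (ReflTransGen (G.Adj (· ∈ unsubdivideEdges e T')) on fun x => x.getD c) := by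
    rintro x y ⟨f | b, hf, hxy⟩
    · exact .single ⟨f.1, val_mem_unsubdivideEdges.2 hf, by
        rcases hxy with ⟨rfl, rfl⟩ | ⟨rfl, rfl⟩ <;> simp [subdivide]⟩
    · by_cases h₀ : .inr false ∈ T'
      · have hc : c = G.src e := if_pos h₀
        cases b <;> rcases hxy with ⟨rfl, rfl⟩ | ⟨rfl, rfl⟩
        all_goals simp only [onFun, subdivide, Option.getD_some, Option.getD_none, hc]
        any_goals exact .refl
        all_goals exact .single ⟨e, mem_unsubdivideEdges_self.2 ⟨h₀, hf⟩, by simp⟩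
      · have hc : c = G.tgt e := if_neg h₀
        obtain rfl : b = true := by cases b; exacts [absurd hf h₀, rfl]
        rcases hxy with ⟨rfl, rfl⟩ | ⟨rfl, rfl⟩ <;> simp only [onFun, subdivide,
          Option.getD_some, Option.getD_none, hc] <;> exact .refl
  intro a b
  exact ReflTransGen.lift' _ step _ _ (hc (some a) (some b))

theorem connectedOn_subdivide_of_connectedOn (h : .inr false ∈ T' ∨ .inr true ∈ T')
    (hc : G.ConnectedOn (· ∈ unsubdivideEdges e T')) : (G.subdivide e).ConnectedOn (· ∈ T') := by
  have step : G.Adj (· ∈ unsubdivideEdges e T') ≤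
      (ReflTransGen ((G.subdivide e).Adj (· ∈ T')) on some) := by
    rintro a b ⟨f, hf, hab⟩
    by_cases hfe : f = e
    · subst hfe
      obtain ⟨h₀, h₁⟩ := mem_unsubdivideEdges_self.1 hf
      rcases hab with ⟨rfl, rfl⟩ | ⟨rfl, rfl⟩
      · exact .head ⟨_, h₀, .inl ⟨rfl, rfl⟩⟩ (.single ⟨_, h₁, .inl ⟨rfl, rfl⟩⟩)
      · exact .head ⟨_, h₁, .inr ⟨rfl, rfl⟩⟩ (.single ⟨_, h₀, .inr ⟨rfl, rfl⟩⟩)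
    · have hf' := (val_mem_unsubdivideEdges (f := ⟨f, hfe⟩)).1 hf
      rcases hab with ⟨rfl, rfl⟩ | ⟨rfl, rfl⟩
      · exact .single ⟨_, hf', .inl ⟨rfl, rfl⟩⟩
      · exact .single ⟨_, hf', .inr ⟨rfl, rfl⟩⟩
  have hsome a b : ReflTransGen ((G.subdivide e).Adj (· ∈ T')) (some a) (some b) :=
    ReflTransGen.lift' _ step _ _ (hc a b)
  obtain ⟨w, hw⟩ : ∃ w, (G.subdivide e).Adj (· ∈ T') none (some w) := by
    rcases h with h | h
    · exact ⟨_, _, h, .inr ⟨rfl, rfl⟩⟩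
    · exact ⟨_, _, h, .inl ⟨rfl, rfl⟩⟩
  have to_w : ∀ x, ReflTransGen ((G.subdivide e).Adj (· ∈ T')) x (some w)
    | none => .single hw
    | some a => hsome a w
  exact fun x y => (to_w x).trans (Std.Symm.symm _ _ (to_w y))

theorem isSpanningTree_subdivide_iff [Fintype V] [Nonempty V] :
    (G.subdivide e).IsSpanningTree T' ↔
      (.inr false ∈ T' ∨ .inr true ∈ T') ∧ G.IsSpanningTree (unsubdivideEdges e T') := by
  by_cases h : .inr false ∈ T' ∨ .inr true ∈ T'
  · have hcard := card_unsubdivideEdges_add_one h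
    simp only [IsSpanningTree, Fintype.card_option, h, true_and]
    exact ⟨fun ⟨hc, _⟩ => ⟨G.connectedOn_of_connectedOn_subdivide hc, by omega⟩,
      fun ⟨hc, _⟩ => ⟨G.connectedOn_subdivide_of_connectedOn h hc, by omega⟩⟩
  · simp only [h, false_and, iff_false]
    exact fun hT => G.not_connectedOn_subdivide (not_or.1 h) hT.1

theorem unsubdivideEdges_eq_iff {T : Finset E} :
    unsubdivideEdges e T' = T ↔
      T'.toLeft = T.subtype (· ≠ e) ∧ (.inr false ∈ T' ∧ .inr true ∈ T' ↔ e ∈ T) := by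
  simp only [Finset.ext_iff, mem_toLeft, mem_subtype]
  refine ⟨fun h => ⟨fun f => ?_, ?_⟩, fun ⟨hl, he⟩ f => ?_⟩
  · rw [← h, val_mem_unsubdivideEdges]
  · rw [← h, mem_unsubdivideEdges_self]
  · by_cases hf : f = e
    · rw [hf, mem_unsubdivideEdges_self, he]
    · rw [← hl ⟨f, hf⟩, ← val_mem_unsubdivideEdges]

theorem filter_unsubdivideEdges_eq_of_mem {T : Finset E} (he : e ∈ T) :
    univ.filter (fun T' => (.inr false ∈ T' ∨ .inr true ∈ T') ∧ unsubdivideEdges e T' = T) =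
      {subdivideEdges e T univ} := by
  have sides : ∀ s : Finset Bool, (false ∈ s ∨ true ∈ s) ∧ false ∈ s ∧ true ∈ s ↔ s = univ := by
    decide
  ext T'
  simp only [mem_filter, mem_univ, true_and, mem_singleton, unsubdivideEdges_eq_iff,
    subdivideEdges, eq_disjSum_iff, he, iff_true, ← sides, mem_toRight]
  tauto

theorem filter_unsubdivideEdges_eq_of_notMem {T : Finset E} (he : e ∉ T) :
    univ.filter (fun T' => (.inr false ∈ T' ∨ .inr true ∈ T') ∧ unsubdivideEdges e T' = T) =
      {subdivideEdges e T {false}, subdivideEdges e T {true}} := by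
  have sides : ∀ s : Finset Bool, (false ∈ s ∨ true ∈ s) ∧ ¬(false ∈ s ∧ true ∈ s) ↔
      s = {false} ∨ s = {true} := by
    decide
  ext T'
  simp only [mem_filter, mem_univ, true_and, mem_insert, mem_singleton, unsubdivideEdges_eq_iff,
    subdivideEdges, eq_disjSum_iff, he, iff_false, ← and_or_left, ← sides, mem_toRight]
  tauto

variable (R : Type*) [CommSemiring R] (e)

noncomputable def subdivideVars (f : E) : MvPolynomial ({f : E // f ≠ e} ⊕ Bool) R :=
  if hf : f = e then X (.inr false) + X (.inr true) else X (.inl ⟨f, hf⟩)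

theorem prod_compl_subdivideEdges (T : Finset E) (s : Finset Bool) :
    ∏ x ∈ (subdivideEdges e T s)ᶜ, (X x : MvPolynomial _ R) =
      (∏ f ∈ Tᶜ.erase e, subdivideVars e R f) * ∏ b ∈ sᶜ, X (.inr b) := by
  have hcompl : (subdivideEdges e T s)ᶜ = subdivideEdges e Tᶜ sᶜ := by
    ext (f | b) <;> simp [subdivideEdges]
  rw [hcompl, subdivideEdges, prod_disjSum, ← filter_ne', ← prod_subtype_eq_prod_filter]
  exact congrArg (· * _) (prod_congr rfl fun f _ => by simp [subdivideVars, f.2])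

theorem sum_prod_compl_filter_unsubdivideEdges_eq (T : Finset E) :
    ∑ T' ∈ univ.filter (fun T' => (.inr false ∈ T' ∨ .inr true ∈ T') ∧ unsubdivideEdges e T' = T),
      ∏ x ∈ T'ᶜ, (X x : MvPolynomial _ R) = ∏ f ∈ Tᶜ, subdivideVars e R f := by
  by_cases he : e ∈ T
  · rw [filter_unsubdivideEdges_eq_of_mem he, sum_singleton, prod_compl_subdivideEdges, compl_univ,
      prod_empty, mul_one, erase_eq_of_notMem (notMem_compl.2 he)]
  · have hne : subdivideEdges e T {false} ≠ subdivideEdges e T {true} := by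
      simp [subdivideEdges]
    rw [filter_unsubdivideEdges_eq_of_notMem he, sum_pair hne, prod_compl_subdivideEdges,
      prod_compl_subdivideEdges, ← mul_add, ← mul_prod_erase _ _ (mem_compl.2 he), mul_comm]
    simp [subdivideVars, show ({false} : Finset Bool)ᶜ = {true} by decide,
      show ({true} : Finset Bool)ᶜ = {false} by decide, add_comm]

end Subdivision

end Multigraph

open MvPolynomial in
/-- Let `Γ` be a finite connected multigraph, `e ∈ E(Γ)`, and `Γ'` the graph
obtained from `Γ` by subdividing the edge `e` into two edges `e₁` and `e₂`.  Then
`P(Γ') = P(Γ)|_{X_e = X_{e₁} + X_{e₂}}`, i.e. `P(Γ')` is obtained from `P(Γ)` by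
substituting `X_{e₁} + X_{e₂}` for the variable `X_e` (and renaming each other variable
`X_f` to itself). -/
theorem graphPolynomial_subdivide {V E : Type} [Fintype V] [Fintype E] [DecidableEq E]
    (G : Multigraph V E) (hG : G.Connected) (e : E) :
    (G.subdivide e).graphPolynomial ℤ =
      aeval (fun f : E =>
          if hf : f = e then
            X (Sum.inr false) + X (Sum.inr true)
          else
            X (Sum.inl ⟨f, hf⟩))
        (G.graphPolynomial ℤ) := by
  have : Nonempty V := hG.1
  classical
  change _ = aeval (Multigraph.subdivideVars e ℤ) _
  have htrees : Finset.univ.filter (G.subdivide e).IsSpanningTree = Finset.univ.filter fun T' =>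
      (.inr false ∈ T' ∨ .inr true ∈ T') ∧ G.IsSpanningTree (Multigraph.unsubdivideEdges e T') :=
    Finset.filter_congr fun _ _ => G.isSpanningTree_subdivide_iff
  rw [Multigraph.graphPolynomial_eq_sum, Multigraph.graphPolynomial_eq_sum, map_sum, htrees,
    ← Finset.sum_fiberwise_of_maps_to (g := Multigraph.unsubdivideEdges e)
      (t := Finset.univ.filter G.IsSpanningTree) (by simp)]
  refine Finset.sum_congr rfl fun T hT => ?_
  simp only [map_prod, aeval_X, Finset.filter_filter]
  rw [← Multigraph.sum_prod_compl_filter_unsubdivideEdges_eq]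
  refine Finset.sum_congr (Finset.filter_congr fun T' _ => ?_) fun _ _ => rfl
  exact ⟨fun h => ⟨h.1.1, h.2⟩, fun h => ⟨⟨h.1, h.2 ▸ (Finset.mem_filter.1 hT).2⟩, h.2⟩⟩
end
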